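/- arXiv:math/0205293 — 3 statements merged into one kernel-verified Lean document; each statement's English description precedes it below -/
import Mathlib

section
/- ∑_{i=1}^{r} (x−1)²/(x^{a_i}−1) + ∑_{i=0}^{r} (x−1)²/((x^{a_i}−1)·(x^{a_{i+1}}−1)) = (x−1)²·D_r(x)/((x^{a_0}−1)·(x^{a_{r+1}}−1)). (Proposition 5.4 with all log discrepancies nonzero, specialized at L = x: the left-hand side is the contribution of the chain E_1, …, E_r to the stringy invariant, namely the sum over all subsets I of {0, …, r+1} meeting {1, …, r} of [E_I°]·∏_{i∈I}(L−1)/(L^{a_i}−1), since the only nonempty strata are the E_i° ≅ ℙ¹ minus two points, of class L−1, and the intersection points E_i ∩ E_{i+1}, of class 1.) -/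
open Finset

/-- `K_i(x) = ∑_{j=0}^{κ_i − 1} x^{j·a_i}` (real powers). -/
noncomputable def KR (x : ℝ) (κ : ℕ → ℕ) (a : ℕ → ℚ) (i : ℕ) : ℝ :=
  ∑ j ∈ Finset.range (κ i), x ^ (((j : ℚ) * a i : ℚ) : ℝ)

/-- The `(i,j)` entry (with `1`-based indices) of the non-symmetric deformation `M(x)`
of the intersection matrix of the chain, with `L` specialized to the real number `x`. -/
noncomputable def entryR (x : ℝ) (κ : ℕ → ℕ) (a : ℕ → ℚ) (i j : ℕ) : ℝ :=
  if i = j then KR x κ a i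
  else if Odd i then
    if j + 1 = i then -(x ^ ((a (i + 1) : ℝ)))
    else if j = i + 1 then -(x ^ ((a (i + 2) : ℝ)))
    else if j = i + 2 then x ^ ((a (i + 1) : ℝ)) - 1
    else 0
  else
    if j + 2 = i then x ^ ((a (i - 1) : ℝ)) - 1
    else if j + 1 = i then -(x ^ ((a (i - 2) : ℝ)))
    else if j = i + 1 then -(x ^ ((a (i - 1) : ℝ)))
    else 0

/-- `D_r(x) = det M(x)`. -/
noncomputable def DR (x : ℝ) (κ : ℕ → ℕ) (a : ℕ → ℚ) (r : ℕ) : ℝ :=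
  Matrix.det (Matrix.of fun i j : Fin r => entryR x κ a ((i : ℕ) + 1) ((j : ℕ) + 1))

section
variable (x : ℝ) (κ : ℕ → ℕ) (a : ℕ → ℚ)

lemma entry_lt (i j : ℕ) (h : i + 3 ≤ j) : entryR x κ a i j = 0 := by
  unfold entryR; split_ifs <;> first | rfl | omega

lemma entry_gt (i j : ℕ) (h : j + 3 ≤ i) : entryR x κ a i j = 0 := by
  unfold entryR; split_ifs <;> first | rfl | omega

lemma entry_even_jp2 (i : ℕ) (h : ¬ Odd i) : entryR x κ a i (i+2) = 0 := by
  unfold entryR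
  rw [if_neg (by omega), if_neg h, if_neg (by omega), if_neg (by omega), if_neg (by omega)]

lemma entry_odd_jm2 (i : ℕ) (h : Odd (i+2)) : entryR x κ a (i+2) i = 0 := by
  unfold entryR
  rw [if_neg (by omega), if_pos h, if_neg (by omega), if_neg (by omega), if_neg (by omega)]

lemma entry_odd_jm2x (i j : ℕ) (h : Odd i) (hij : j + 2 = i) : entryR x κ a i j = 0 := by
  unfold entryR
  rw [if_neg (by omega), if_pos h, if_neg (by omega), if_neg (by omega), if_neg (by omega)]

lemma entry_diag (i : ℕ) : entryR x κ a i i = KR x κ a i := by simp [entryR]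

lemma entry_odd_jp1 (i : ℕ) (h : Odd i) : entryR x κ a i (i+1) = -(x ^ ((a (i+2) : ℝ))) := by
  unfold entryR; rw [if_neg (by omega), if_pos h, if_neg (by omega), if_pos rfl]

lemma entry_odd_jp2' (i : ℕ) (h : Odd i) : entryR x κ a i (i+2) = x ^ ((a (i+1) : ℝ)) - 1 := by
  unfold entryR; rw [if_neg (by omega), if_pos h, if_neg (by omega), if_neg (by omega), if_pos rfl]

lemma entry_pred (i : ℕ) (h : Odd (i+1)) : entryR x κ a (i+1) i = -(x ^ ((a (i+2) : ℝ))) := by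
  unfold entryR; rw [if_neg (by omega), if_pos h, if_pos rfl]

lemma entry_even_jm2 (i : ℕ) (h : ¬ Odd (i+2)) : entryR x κ a (i+2) i = x ^ ((a (i+1) : ℝ)) - 1 := by
  unfold entryR; rw [if_neg (by omega), if_neg h, if_pos rfl]; norm_num

lemma entry_even_jm1 (i : ℕ) (h : ¬ Odd (i+2)) : entryR x κ a (i+2) (i+1) = -(x ^ ((a i : ℝ))) := by
  unfold entryR; rw [if_neg (by omega), if_neg h, if_neg (by omega), if_pos rfl]; norm_num

lemma entry_even_jp1 (i : ℕ) (h : ¬ Odd (i+1)) : entryR x κ a (i+1) (i+2) = -(x ^ ((a i : ℝ))) := by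
  unfold entryR; rw [if_neg (by omega), if_neg h, if_neg (by omega), if_neg (by omega), if_pos rfl]; norm_num
end

lemma succAbove_coe {m : ℕ} (hm : 1 ≤ m) (k : Fin m) :
    (((⟨m - 1, by omega⟩ : Fin (m+1)).succAbove k : Fin (m+1)) : ℕ)
      = if (k : ℕ) + 1 = m then m else (k : ℕ) := by
  rcases Nat.lt_or_ge (k : ℕ) (m - 1) with h | h
  · rw [Fin.succAbove_of_castSucc_lt _ _ (by simp [Fin.lt_def]; omega), if_neg (by omega)]
    simp
  · have hk : (k : ℕ) = m - 1 := by omega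
    rw [Fin.succAbove_of_le_castSucc _ _ (by simp [Fin.le_def]; omega), if_pos (by omega)]
    simp; omega

lemma det_row_two {m : ℕ} (hm : 1 ≤ m) (A : Matrix (Fin (m+1)) (Fin (m+1)) ℝ)
    (hz0 : ∀ j : Fin (m+1), (j : ℕ) + 2 ≤ m → A (Fin.last m) j = 0) :
    A.det = A (Fin.last m) (Fin.last m) * (A.submatrix Fin.castSucc Fin.castSucc).det
      - A (Fin.last m) ⟨m - 1, by omega⟩
        * (A.submatrix Fin.castSucc (Fin.succAbove ⟨m - 1, by omega⟩)).det := by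
  rw [Matrix.det_succ_row A (Fin.last m)]
  set j1 : Fin (m+1) := ⟨m - 1, by omega⟩ with hj1
  have hne : j1 ≠ Fin.last m := by simp [hj1, Fin.ext_iff]; omega
  have hsub : ∑ j : Fin (m+1), (-1 : ℝ) ^ ((Fin.last m : ℕ) + (j : ℕ)) * A (Fin.last m) j
        * (A.submatrix (Fin.last m).succAbove j.succAbove).det
      = ∑ j ∈ ({j1, Fin.last m} : Finset (Fin (m+1))), (-1 : ℝ) ^ ((Fin.last m : ℕ) + (j : ℕ))
        * A (Fin.last m) j * (A.submatrix (Fin.last m).succAbove j.succAbove).det := by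
    refine (Finset.sum_subset (Finset.subset_univ _) ?_).symm
    intro z _ hz2
    simp only [Finset.mem_insert, Finset.mem_singleton, not_or] at hz2
    have h1 : (z : ℕ) ≠ m - 1 := by
      intro h; exact hz2.1 (Fin.ext (by simp [hj1, h]))
    have h2 : (z : ℕ) ≠ m := by
      intro h; exact hz2.2 (Fin.ext (by simp [h]))
    have hle : (z : ℕ) + 2 ≤ m := by have := z.isLt; omega
    rw [hz0 z hle]; ring
  rw [hsub, Finset.sum_pair hne, Fin.succAbove_last]
  have e1 : (-1 : ℝ) ^ ((Fin.last m : ℕ) + (j1 : ℕ)) = -1 := by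
    simp only [Fin.val_last, hj1]
    have : m + (m - 1) = 2 * (m - 1) + 1 := by omega
    rw [this, pow_succ, pow_mul]; norm_num
  have e2 : (-1 : ℝ) ^ ((Fin.last m : ℕ) + (Fin.last m : ℕ)) = 1 := by
    simp only [Fin.val_last, ← two_mul, pow_mul]; norm_num
  rw [e1, e2]; ring

lemma det_col_two {m : ℕ} (hm : 1 ≤ m) (A : Matrix (Fin (m+1)) (Fin (m+1)) ℝ)
    (hz : ∀ i : Fin (m+1), (i : ℕ) + 2 ≤ m → A i (Fin.last m) = 0) :
    A.det = A (Fin.last m) (Fin.last m) * (A.submatrix Fin.castSucc Fin.castSucc).det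
      - A ⟨m - 1, by omega⟩ (Fin.last m)
        * (A.submatrix (Fin.succAbove ⟨m - 1, by omega⟩) Fin.castSucc).det := by
  rw [← Matrix.det_transpose A, det_row_two hm _ (fun j hj => hz j hj)]
  have hdt : ∀ f g : Fin m → Fin (m+1),
      (A.transpose.submatrix f g).det = (A.submatrix g f).det := fun f g => by
    rw [show A.transpose.submatrix f g = (A.submatrix g f).transpose from rfl,
      Matrix.det_transpose]
  rw [hdt, hdt]
  rfl

noncomputable def Dmat (x : ℝ) (κ : ℕ → ℕ) (a : ℕ → ℚ) (n : ℕ) : Matrix (Fin n) (Fin n) ℝ :=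
  Matrix.of fun i j => entryR x κ a ((i : ℕ) + 1) ((j : ℕ) + 1)

noncomputable def Cmat (x : ℝ) (κ : ℕ → ℕ) (a : ℕ → ℚ) (n : ℕ) : Matrix (Fin n) (Fin n) ℝ :=
  Matrix.of fun i j => entryR x κ a (if (i : ℕ) + 1 = n then n + 1 else (i : ℕ) + 1) ((j : ℕ) + 1)

noncomputable def Emat (x : ℝ) (κ : ℕ → ℕ) (a : ℕ → ℚ) (n : ℕ) : Matrix (Fin n) (Fin n) ℝ :=
  Matrix.of fun i j => entryR x κ a ((i : ℕ) + 1) (if (j : ℕ) + 1 = n then n + 1 else (j : ℕ) + 1)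

section
variable (x : ℝ) (κ : ℕ → ℕ) (a : ℕ → ℚ)

lemma sub_DD (n : ℕ) :
    (Dmat x κ a (n+1)).submatrix Fin.castSucc Fin.castSucc = Dmat x κ a n := by
  ext i j; simp [Dmat, Matrix.submatrix_apply]

lemma sub_DC (n : ℕ) (hn : 1 ≤ n) :
    (Dmat x κ a (n+1)).submatrix (Fin.succAbove ⟨n - 1, by omega⟩) Fin.castSucc
      = Cmat x κ a n := by
  ext i j
  have hi := i.isLt; have hj := j.isLt
  simp only [Matrix.submatrix_apply, Dmat, Cmat, Matrix.of_apply, Fin.coe_castSucc]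
  rw [succAbove_coe hn]
  split_ifs <;> congr 2 <;> omega

lemma sub_DE (n : ℕ) (hn : 1 ≤ n) :
    (Dmat x κ a (n+1)).submatrix Fin.castSucc (Fin.succAbove ⟨n - 1, by omega⟩)
      = Emat x κ a n := by
  ext i j
  have hi := i.isLt; have hj := j.isLt
  simp only [Matrix.submatrix_apply, Dmat, Emat, Matrix.of_apply, Fin.coe_castSucc]
  rw [succAbove_coe hn]
  split_ifs <;> congr 2 <;> omega

lemma sub_CD (n : ℕ) :
    (Cmat x κ a (n+1)).submatrix Fin.castSucc Fin.castSucc = Dmat x κ a n := by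
  ext i j
  have hi := i.isLt
  simp only [Matrix.submatrix_apply, Cmat, Dmat, Matrix.of_apply, Fin.coe_castSucc]
  split_ifs <;> congr 2 <;> omega

lemma sub_CE (n : ℕ) (hn : 1 ≤ n) :
    (Cmat x κ a (n+1)).submatrix Fin.castSucc (Fin.succAbove ⟨n - 1, by omega⟩)
      = Emat x κ a n := by
  ext i j
  have hi := i.isLt; have hj := j.isLt
  simp only [Matrix.submatrix_apply, Cmat, Emat, Matrix.of_apply, Fin.coe_castSucc]
  rw [succAbove_coe hn]
  split_ifs <;> congr 2 <;> omega

lemma sub_ED (n : ℕ) :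
    (Emat x κ a (n+1)).submatrix Fin.castSucc Fin.castSucc = Dmat x κ a n := by
  ext i j
  have hj := j.isLt
  simp only [Matrix.submatrix_apply, Emat, Dmat, Matrix.of_apply, Fin.coe_castSucc]
  split_ifs <;> congr 2 <;> omega

lemma sub_EC (n : ℕ) (hn : 1 ≤ n) :
    (Emat x κ a (n+1)).submatrix (Fin.succAbove ⟨n - 1, by omega⟩) Fin.castSucc
      = Cmat x κ a n := by
  ext i j
  have hi := i.isLt; have hj := j.isLt
  simp only [Matrix.submatrix_apply, Emat, Cmat, Matrix.of_apply, Fin.coe_castSucc]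
  rw [succAbove_coe hn]
  split_ifs <;> congr 2 <;> omega

lemma detA (m : ℕ) (hm : Odd m) :
    (Dmat x κ a (m+1)).det = KR x κ a (m+1) * (Dmat x κ a m).det
      + x ^ ((a (m+2) : ℝ)) * (Cmat x κ a m).det := by
  have h1 : 1 ≤ m := hm.pos
  rw [det_col_two h1 _ ?hz, sub_DD, sub_DC x κ a m h1]
  · have e1 : Dmat x κ a (m+1) (Fin.last m) (Fin.last m) = KR x κ a (m+1) := by
      simp only [Dmat, Matrix.of_apply, Fin.val_last]; exact entry_diag x κ a (m+1)
    have e2 : Dmat x κ a (m+1) ⟨m - 1, by omega⟩ (Fin.last m) = -(x ^ ((a (m+2) : ℝ))) := by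
      simp only [Dmat, Matrix.of_apply, Fin.val_last]
      have h3 : m - 1 + 1 = m := by omega
      rw [h3]
      exact entry_odd_jp1 x κ a m hm
    rw [e1, e2]; ring
  case hz =>
    intro i hi
    simp only [Dmat, Matrix.of_apply, Fin.val_last]
    rcases Nat.lt_or_ge ((i : ℕ) + 4) (m + 2) with h | h
    · exact entry_lt x κ a _ _ (by omega)
    · have hpar : ¬ Odd ((i : ℕ) + 1) := by
        simp only [Nat.odd_iff] at hm ⊢; omega
      convert entry_even_jp2 x κ a ((i : ℕ) + 1) hpar using 2
      omega

lemma detB (m : ℕ) (hm : ¬ Odd m) (h2 : 2 ≤ m) :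
    (Dmat x κ a (m+1)).det = KR x κ a (m+1) * (Dmat x κ a m).det
      + x ^ ((a (m+2) : ℝ)) * (Emat x κ a m).det := by
  have h1 : 1 ≤ m := by omega
  rw [det_row_two h1 _ ?hz, sub_DD, sub_DE x κ a m h1]
  · have e1 : Dmat x κ a (m+1) (Fin.last m) (Fin.last m) = KR x κ a (m+1) := by
      simp only [Dmat, Matrix.of_apply, Fin.val_last]; exact entry_diag x κ a (m+1)
    have e2 : Dmat x κ a (m+1) (Fin.last m) ⟨m - 1, by omega⟩ = -(x ^ ((a (m+2) : ℝ))) := by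
      simp only [Dmat, Matrix.of_apply, Fin.val_last]
      have h3 : m - 1 + 1 = m := by omega
      rw [h3]
      have h4 : m = (m - 1) + 1 := by omega
      have hpar : Odd ((m - 1) + 1 + 1) := by simp only [Nat.odd_iff] at hm ⊢; omega
      rw [h4]
      exact entry_pred x κ a (m - 1 + 1) hpar
    rw [e1, e2]; ring
  case hz =>
    intro j hj
    simp only [Dmat, Matrix.of_apply, Fin.val_last]
    rcases Nat.lt_or_ge ((j : ℕ) + 4) (m + 2) with h | h
    · exact entry_gt x κ a _ _ (by omega)
    · refine entry_odd_jm2x x κ a (m+1) ((j : ℕ) + 1) ?_ (by omega)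
      simp only [Nat.odd_iff] at hm ⊢; omega

lemma detC (m : ℕ) (hm : ¬ Odd m) (h2 : 2 ≤ m) :
    (Cmat x κ a (m+1)).det = -(x ^ ((a m : ℝ))) * (Dmat x κ a m).det
      - (x ^ ((a (m+1) : ℝ)) - 1) * (Emat x κ a m).det := by
  have h1 : 1 ≤ m := by omega
  have hpar : ¬ Odd (m + 2) := by simp only [Nat.odd_iff] at hm ⊢; omega
  rw [det_row_two h1 _ ?hz, sub_CD, sub_CE x κ a m h1]
  · have e1 : Cmat x κ a (m+1) (Fin.last m) (Fin.last m) = -(x ^ ((a m : ℝ))) := by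
      simp only [Cmat, Matrix.of_apply, Fin.val_last]
      rw [if_true]
      exact entry_even_jm1 x κ a m hpar
    have e2 : Cmat x κ a (m+1) (Fin.last m) ⟨m - 1, by omega⟩
        = x ^ ((a (m+1) : ℝ)) - 1 := by
      simp only [Cmat, Matrix.of_apply, Fin.val_last]
      rw [if_true]
      have h3 : m - 1 + 1 = m := by omega
      rw [h3]
      exact entry_even_jm2 x κ a m hpar
    rw [e1, e2]
  case hz =>
    intro j hj
    simp only [Cmat, Matrix.of_apply, Fin.val_last]
    rw [if_true]
    exact entry_gt x κ a _ _ (by omega)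

lemma detD (m : ℕ) (hm : Odd m) :
    (Emat x κ a (m+1)).det = -(x ^ ((a m : ℝ))) * (Dmat x κ a m).det
      - (x ^ ((a (m+1) : ℝ)) - 1) * (Cmat x κ a m).det := by
  have h1 : 1 ≤ m := hm.pos
  have hpar : ¬ Odd (m + 1) := by simp only [Nat.odd_iff] at hm ⊢; omega
  rw [det_col_two h1 _ ?hz, sub_ED, sub_EC x κ a m h1]
  · have e1 : Emat x κ a (m+1) (Fin.last m) (Fin.last m) = -(x ^ ((a m : ℝ))) := by
      simp only [Emat, Matrix.of_apply, Fin.val_last]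
      rw [if_true]
      exact entry_even_jp1 x κ a m hpar
    have e2 : Emat x κ a (m+1) ⟨m - 1, by omega⟩ (Fin.last m)
        = x ^ ((a (m+1) : ℝ)) - 1 := by
      simp only [Emat, Matrix.of_apply, Fin.val_last]
      rw [if_true]
      have h3 : m - 1 + 1 = m := by omega
      rw [h3]
      exact entry_odd_jp2' x κ a m hm
    rw [e1, e2]
  case hz =>
    intro i hi
    simp only [Emat, Matrix.of_apply, Fin.val_last]
    rw [if_true]
    exact entry_lt x κ a _ _ (by omega)

end

noncomputable def SR (x : ℝ) (a : ℕ → ℚ) (n : ℕ) : ℝ :=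
  (∑ i ∈ Finset.Icc 1 n, 1 / (x ^ ((a i : ℝ)) - 1))
    + ∑ i ∈ Finset.range (n + 1), 1 / ((x ^ ((a i : ℝ)) - 1) * (x ^ ((a (i+1) : ℝ)) - 1))

section
variable (x : ℝ) (κ : ℕ → ℕ) (a : ℕ → ℚ)

lemma SR_zero : SR x a 0 = 1 / ((x ^ ((a 0 : ℝ)) - 1) * (x ^ ((a 1 : ℝ)) - 1)) := by
  simp [SR]

lemma SR_succ (n : ℕ) : SR x a (n+1) = SR x a n + 1 / (x ^ ((a (n+1) : ℝ)) - 1)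
    + 1 / ((x ^ ((a (n+1) : ℝ)) - 1) * (x ^ ((a (n+2) : ℝ)) - 1)) := by
  unfold SR
  rw [Finset.sum_Icc_succ_top (by omega), Finset.sum_range_succ]
  ring

lemma rpow_ne_one (hx : 0 < x) (hx1 : x ≠ 1) (i : ℕ) (hai : a i ≠ 0) :
    x ^ ((a i : ℝ)) - 1 ≠ 0 := by
  rw [sub_ne_zero]
  intro h
  rw [Real.rpow_def_of_pos hx, Real.exp_eq_one_iff] at h
  rcases mul_eq_zero.mp h with h' | h'
  · exact Real.log_ne_zero_of_pos_of_ne_one hx hx1 h'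
  · exact hai (by exact_mod_cast h')

lemma KR_rel (hx : 0 < x) (i : ℕ) (hch : (κ i : ℚ) * a i = a (i - 1) + a (i + 1)) :
    KR x κ a i * (x ^ ((a i : ℝ)) - 1)
      = x ^ ((a (i-1) : ℝ)) * x ^ ((a (i+1) : ℝ)) - 1 := by
  unfold KR
  have h1 : ∀ j : ℕ, x ^ ((((j : ℚ) * a i : ℚ)) : ℝ) = (x ^ ((a i : ℝ))) ^ j := by
    intro j
    rw [show ((((j : ℚ) * a i : ℚ)) : ℝ) = (a i : ℝ) * (j : ℕ) by push_cast; ring]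
    exact Real.rpow_mul_natCast hx.le _ _
  simp_rw [h1]
  rw [geom_sum_mul]
  congr 1
  rw [← Real.rpow_mul_natCast hx.le (a i : ℝ) (κ i), ← Real.rpow_add hx]
  congr 1
  have := congrArg (fun q : ℚ => (q : ℝ)) hch
  push_cast at this
  linarith

lemma alg0 (K X0 X2 c1 : ℝ) (h0 : X0 - 1 ≠ 0) (h1 : c1 ≠ 0) (h2 : X2 - 1 ≠ 0)
    (hK : K * c1 = X0 * X2 - 1) :
    K = (X0 - 1) * (X2 - 1) * (1 / ((X0 - 1) * c1) + 1 / c1 + 1 / (c1 * (X2 - 1))) := by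
  have hK' : K = (X0 * X2 - 1) / c1 := by rw [eq_div_iff h1]; exact hK
  rw [hK']; field_simp; ring

lemma alg1 (K S c0 Xm cm1 X2 : ℝ) (h1 : cm1 ≠ 0) (h2 : X2 - 1 ≠ 0)
    (hK : K * cm1 = Xm * X2 - 1) :
    K * (c0 * cm1 * S) + X2 * (c0 / cm1 - c0 * (Xm - 1) * S)
      = c0 * (X2 - 1) * (S + 1 / cm1 + 1 / (cm1 * (X2 - 1))) := by
  have hK' : K = (Xm * X2 - 1) / cm1 := by rw [eq_div_iff h1]; exact hK
  rw [hK']; field_simp; ring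

lemma alg2 (S c0 Xm cm1 X3 : ℝ) (h1 : cm1 ≠ 0) (h2 : X3 - 1 ≠ 0) :
    -Xm * (c0 * cm1 * S) - cm1 * (c0 / cm1 - c0 * (Xm - 1) * S)
      = c0 / (X3 - 1) - c0 * cm1 * (S + 1 / cm1 + 1 / (cm1 * (X3 - 1))) := by
  field_simp
  ring

lemma key (r : ℕ) (hx : 0 < x) (hx1 : x ≠ 1)
    (ha : ∀ i, i ≤ r + 1 → a i ≠ 0)
    (hchain : ∀ i, 1 ≤ i → i ≤ r → (κ i : ℚ) * a i = a (i - 1) + a (i + 1)) :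
    ∀ n, n ≤ r →
      ((Dmat x κ a n).det
          = (x ^ ((a 0 : ℝ)) - 1) * (x ^ ((a (n+1) : ℝ)) - 1) * SR x a n)
      ∧ (1 ≤ n → (if Odd n then (Cmat x κ a n).det else (Emat x κ a n).det)
          = (x ^ ((a 0 : ℝ)) - 1) / (x ^ ((a (n+1) : ℝ)) - 1)
            - (x ^ ((a 0 : ℝ)) - 1) * (x ^ ((a n : ℝ)) - 1) * SR x a n) := by
  have hc : ∀ i, i ≤ r + 1 → x ^ ((a i : ℝ)) - 1 ≠ 0 := fun i hi =>
    rpow_ne_one x a hx hx1 i (ha i hi)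
  intro n
  induction n using Nat.strong_induction_on with
  | _ n ih =>
  intro hn
  match n, hn with
  | 0, hn =>
    constructor
    · have h0 := hc 0 (by omega)
      have h1 := hc 1 (by omega)
      rw [show (Dmat x κ a 0).det = 1 from Matrix.det_fin_zero, SR_zero]
      field_simp
    · intro h; omega
  | 1, hn =>
    have h0 := hc 0 (by omega)
    have h1 := hc 1 (by omega)
    have h2 := hc 2 (by omega)
    constructor
    · have hD1 : (Dmat x κ a 1).det = KR x κ a 1 := by
        rw [Matrix.det_fin_one]
        exact entry_diag x κ a 1
      rw [hD1, SR_succ x a 0, SR_zero]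
      have hK := KR_rel x κ a hx 1 (hchain 1 (by omega) (by omega))
      exact alg0 _ _ _ _ h0 h1 h2 hK
    · intro _
      rw [if_pos (by decide)]
      have hC1 : (Cmat x κ a 1).det = -(x ^ ((a 0 : ℝ))) := by
        rw [Matrix.det_fin_one]
        have : Cmat x κ a 1 0 0 = entryR x κ a 2 1 := by
          simp [Cmat]
        rw [this]
        exact entry_even_jm1 x κ a 0 (by decide)
      rw [hC1, SR_succ x a 0, SR_zero]
      field_simp
      ring
  | (m+2), hn =>
    have hm1r : m + 1 ≤ r := by omega
    obtain ⟨ihP, ihQ⟩ := ih (m+1) (by omega) hm1r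
    have ihQ' := ihQ (by omega)
    have h0 := hc 0 (by omega)
    have hcm1 := hc (m+1) (by omega)
    have hcm2 := hc (m+2) (by omega)
    have hcm3 := hc (m+3) (by omega)
    have hK := KR_rel x κ a hx (m+2) (hchain (m+2) (by omega) (by omega))
    rcases Nat.even_or_odd (m+1) with hme | hmo
    · -- m+1 even, n = m+2 odd : use detB, detC with m+1
      have hnotodd : ¬ Odd (m+1) := by
        simp only [Nat.even_iff] at hme; simp only [Nat.odd_iff]; omega
      have h2le : 2 ≤ m + 1 := by
        have := Nat.even_iff.mp hme; omega
      rw [if_neg hnotodd] at ihQ'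
      constructor
      · rw [detB x κ a (m+1) hnotodd h2le, ihP, ihQ', SR_succ x a (m+1)]
        exact alg1 (KR x κ a (m+2)) (SR x a (m+1)) (x ^ ((a 0 : ℝ)) - 1)
          (x ^ ((a (m+1) : ℝ))) (x ^ ((a (m+2) : ℝ)) - 1) (x ^ ((a (m+3) : ℝ)))
          hcm2 hcm3 hK
      · intro _
        rw [if_pos (by
          simp only [Nat.even_iff] at hme; simp only [Nat.odd_iff]; omega)]
        rw [detC x κ a (m+1) hnotodd h2le, ihP, ihQ', SR_succ x a (m+1)]
        exact alg2 (SR x a (m+1)) (x ^ ((a 0 : ℝ)) - 1) (x ^ ((a (m+1) : ℝ)))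
          (x ^ ((a (m+2) : ℝ)) - 1) (x ^ ((a (m+3) : ℝ))) hcm2 hcm3
    · -- m+1 odd, n = m+2 even : use detA, detD with m+1
      rw [if_pos hmo] at ihQ'
      constructor
      · rw [detA x κ a (m+1) hmo, ihP, ihQ', SR_succ x a (m+1)]
        exact alg1 (KR x κ a (m+2)) (SR x a (m+1)) (x ^ ((a 0 : ℝ)) - 1)
          (x ^ ((a (m+1) : ℝ))) (x ^ ((a (m+2) : ℝ)) - 1) (x ^ ((a (m+3) : ℝ)))
          hcm2 hcm3 hK
      · intro _
        rw [if_neg (by simp only [Nat.odd_iff] at hmo ⊢; omega)]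
        rw [detD x κ a (m+1) hmo, ihP, ihQ', SR_succ x a (m+1)]
        exact alg2 (SR x a (m+1)) (x ^ ((a 0 : ℝ)) - 1) (x ^ ((a (m+1) : ℝ)))
          (x ^ ((a (m+2) : ℝ)) - 1) (x ^ ((a (m+3) : ℝ))) hcm2 hcm3

end

/-- Proposition 5.4 with all log discrepancies nonzero, specialized at `L = x`:
the contribution of the chain `E_1, …, E_r` to the stringy invariant equals
`(x−1)²·D_r(x)/((x^{a_0}−1)·(x^{a_{r+1}}−1))`. -/
theorem chain_contribution_eq (r : ℕ) (hr : 1 ≤ r) (x : ℝ) (hx : 0 < x) (hx1 : x ≠ 1)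
    (a : ℕ → ℚ) (ha : ∀ i, i ≤ r + 1 → a i ≠ 0) (κ : ℕ → ℕ)
    (hκ : ∀ i, 1 ≤ i → i ≤ r → 2 ≤ κ i)
    (hchain : ∀ i, 1 ≤ i → i ≤ r → (κ i : ℚ) * a i = a (i - 1) + a (i + 1)) :
    (∑ i ∈ Finset.Icc 1 r, (x - 1) ^ 2 / (x ^ ((a i : ℝ)) - 1))
      + (∑ i ∈ Finset.range (r + 1),
          (x - 1) ^ 2 / ((x ^ ((a i : ℝ)) - 1) * (x ^ ((a (i + 1) : ℝ)) - 1)))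
      = (x - 1) ^ 2 * DR x κ a r / ((x ^ ((a 0 : ℝ)) - 1) * (x ^ ((a (r + 1) : ℝ)) - 1)) := by
  have hc0 := rpow_ne_one x a hx hx1 0 (ha 0 (by omega))
  have hcr1 := rpow_ne_one x a hx hx1 (r+1) (ha (r+1) (by omega))
  obtain ⟨hP, _⟩ := key x κ a r hx hx1 ha hchain r le_rfl
  have hDR : DR x κ a r = (Dmat x κ a r).det := rfl
  rw [hDR, hP]
  have hL : (∑ i ∈ Finset.Icc 1 r, (x - 1) ^ 2 / (x ^ ((a i : ℝ)) - 1))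
      + (∑ i ∈ Finset.range (r + 1),
          (x - 1) ^ 2 / ((x ^ ((a i : ℝ)) - 1) * (x ^ ((a (i + 1) : ℝ)) - 1)))
      = (x - 1) ^ 2 * SR x a r := by
    unfold SR
    rw [mul_add, Finset.mul_sum, Finset.mul_sum]
    simp_rw [mul_one_div]
  rw [hL]
  field_simp
end

section
/- ∑_{i=0}^{r} 1/(a_i·a_{i+1}) = (−1)^r·det N/(a_0·a_{r+1}); moreover (−1)^r·det N > 0, so that (−1)^r·det N equals the absolute value d_r of the determinant of the intersection matrix of the chain. (Addendum 5.8: the contribution of the chain E_1, …, E_r to the stringy Euler number e(S) is d_r/(a_0·a_{r+1}).) -/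
open Finset

/-- The intersection matrix of a chain of curves `E_1, …, E_r` with self-intersections `−κ_i`:
tridiagonal with diagonal entries `−κ_i` and off-diagonal entries `1` (1-based indices). -/
def chainMatrix (r : ℕ) (κ : ℕ → ℕ) : Matrix (Fin r) (Fin r) ℚ :=
  Matrix.of fun i j =>
    if (i : ℕ) = (j : ℕ) then -(κ ((i : ℕ) + 1) : ℚ)
    else if (i : ℕ) + 1 = (j : ℕ) ∨ (j : ℕ) + 1 = (i : ℕ) then 1
    else 0

lemma val_succAbove' {n : ℕ} (p : Fin (n + 1)) (i : Fin n) :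
    ((p.succAbove i : Fin (n + 1)) : ℕ) = if (i : ℕ) < (p : ℕ) then (i : ℕ) else (i : ℕ) + 1 := by
  rw [Fin.succAbove]
  split_ifs with h1 h2 h2 <;>
    simp_all [Fin.lt_def, Fin.coe_castSucc, Fin.val_succ]

lemma chainMatrix_congr {r s : ℕ} (κ : ℕ → ℕ) (i j : Fin r) (i' j' : Fin s)
    (hi : (i : ℕ) = (i' : ℕ)) (hj : (j : ℕ) = (j' : ℕ)) :
    chainMatrix r κ i j = chainMatrix s κ i' j' := by
  simp [chainMatrix, hi, hj]

lemma neg_one_pow_double (n : ℕ) : ((-1 : ℚ)) ^ (n + n) = 1 := by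
  rw [← two_mul, pow_mul]; norm_num

lemma chain_subdet (κ : ℕ → ℕ) (n : ℕ) :
    ((chainMatrix (n + 2) κ).submatrix (Fin.last (n + 1)).succAbove
        (⟨n, by omega⟩ : Fin (n + 2)).succAbove).det = (chainMatrix n κ).det := by
  set M := (chainMatrix (n + 2) κ).submatrix (Fin.last (n + 1)).succAbove
      (⟨n, by omega⟩ : Fin (n + 2)).succAbove with hM
  rw [Matrix.det_succ_column M (Fin.last n)]
  rw [Finset.sum_eq_single (Fin.last n)]
  · have hentry : M (Fin.last n) (Fin.last n) = 1 := by
      simp only [hM, Matrix.submatrix_apply, chainMatrix, Matrix.of_apply, val_succAbove',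
        Fin.val_last]
      split_ifs <;> first | rfl | (exfalso; omega)
    have hsub : M.submatrix (Fin.last n).succAbove (Fin.last n).succAbove = chainMatrix n κ := by
      ext i j
      simp only [hM, Matrix.submatrix_apply]
      apply chainMatrix_congr
      · have := i.isLt
        rw [val_succAbove', val_succAbove']
        simp only [Fin.val_last]
        split_ifs <;> omega
      · have := j.isLt
        rw [val_succAbove', val_succAbove']
        simp only [Fin.val_last]
        split_ifs <;> omega
    rw [hentry, hsub]
    simp [Fin.val_last, neg_one_pow_double]
  · intro i _ hi
    have h1 : (i : ℕ) ≠ n := fun h => hi (Fin.ext (by simp [Fin.val_last, h]))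
    have hz : M i (Fin.last n) = 0 := by
      have := i.isLt
      simp only [hM, Matrix.submatrix_apply, chainMatrix, Matrix.of_apply, val_succAbove',
        Fin.val_last]
      split_ifs <;> first | rfl | (exfalso; omega)
    rw [hz]; ring
  · intro h; exact absurd (Finset.mem_univ _) h

lemma chain_det_rec (κ : ℕ → ℕ) (n : ℕ) :
    (chainMatrix (n + 2) κ).det
      = -(κ (n + 2) : ℚ) * (chainMatrix (n + 1) κ).det - (chainMatrix n κ).det := by
  have hn : n < n + 2 := by omega
  set j0 : Fin (n + 2) := ⟨n, hn⟩ with hj0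
  rw [Matrix.det_succ_row _ (Fin.last (n + 1))]
  have hzero : ∀ j ∈ (Finset.univ : Finset (Fin (n + 2))),
      j ∉ ({j0, Fin.last (n + 1)} : Finset (Fin (n + 2))) →
      (-1 : ℚ) ^ ((Fin.last (n + 1) : ℕ) + (j : ℕ)) * chainMatrix (n + 2) κ (Fin.last (n + 1)) j *
        ((chainMatrix (n + 2) κ).submatrix (Fin.last (n + 1)).succAbove j.succAbove).det = 0 := by
    intro j _ hj
    simp only [Finset.mem_insert, Finset.mem_singleton] at hj
    push_neg at hj
    have h1 : (j : ℕ) ≠ n := fun h => hj.1 (Fin.ext h)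
    have h2 : (j : ℕ) ≠ n + 1 := fun h => hj.2 (Fin.ext h)
    have : chainMatrix (n + 2) κ (Fin.last (n + 1)) j = 0 := by
      simp only [chainMatrix, Matrix.of_apply, Fin.val_last]
      have := j.isLt
      rw [if_neg (by omega), if_neg (by omega)]
    rw [this]; ring
  rw [← Finset.sum_subset (Finset.subset_univ {j0, Fin.last (n + 1)}) hzero,
    Finset.sum_pair (by simp [hj0, Fin.ext_iff])]
  have e1 : chainMatrix (n + 2) κ (Fin.last (n + 1)) j0 = 1 := by
    have hval : (j0 : ℕ) = n := rfl
    simp only [chainMatrix, Matrix.of_apply, Fin.val_last, hval]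
    norm_num
  have e2 : chainMatrix (n + 2) κ (Fin.last (n + 1)) (Fin.last (n + 1)) = -(κ (n + 2) : ℚ) := by
    simp only [chainMatrix, Matrix.of_apply, Fin.val_last]
    norm_num
  have esub : (chainMatrix (n + 2) κ).submatrix (Fin.last (n + 1)).succAbove
      (Fin.last (n + 1)).succAbove = chainMatrix (n + 1) κ := by
    ext i j
    simp only [Matrix.submatrix_apply]
    apply chainMatrix_congr <;>
      (rw [val_succAbove']; simp only [Fin.val_last]; rw [if_pos (by omega)])
  have esubd := chain_subdet κ n
  rw [e1, e2, esub]
  rw [show ((chainMatrix (n + 2) κ).submatrix (Fin.last (n + 1)).succAbove j0.succAbove).det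
      = (chainMatrix n κ).det from esubd]
  simp only [Fin.val_last, hj0]
  have s1 : ((-1 : ℚ)) ^ (n + 1 + n) = -1 := by
    rw [show n + 1 + n = (n + n) + 1 by omega, pow_succ, neg_one_pow_double]; ring
  have s2 : ((-1 : ℚ)) ^ (n + 1 + (n + 1)) = 1 := by
    rw [show n + 1 + (n + 1) = (n + 1) + (n + 1) by omega, neg_one_pow_double]
  rw [s1, s2]
  ring

lemma chain_det_zero (κ : ℕ → ℕ) : (chainMatrix 0 κ).det = 1 := Matrix.det_isEmpty

lemma chain_det_one (κ : ℕ → ℕ) : (chainMatrix 1 κ).det = -(κ 1 : ℚ) := by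
  rw [Matrix.det_fin_one]; rfl

lemma step_identity (x y z w T k : ℚ) (hx : x ≠ 0) (hy : y ≠ 0) (hz : z ≠ 0)
    (h : k * y = x + z) :
    w * z * (T + 1 / (x * y) + 1 / (y * z)) = k * (w * y * (T + 1 / (x * y))) - w * x * T := by
  apply mul_left_cancel₀ (show (x * y * z : ℚ) ≠ 0 by simp [hx, hy, hz])
  have e1 : x * y * z * (1 / (x * y)) = z := by field_simp
  have e2 : x * y * z * (1 / (y * z)) = x := by field_simp
  calc x * y * z * (w * z * (T + 1 / (x * y) + 1 / (y * z)))
      = w * z * (x * y * z * T) + w * z * (x * y * z * (1/(x*y))) + w * z * (x*y*z*(1/(y*z))) := by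
        ring
    _ = w * z * (x * y * z * T) + w * z * z + w * z * x := by rw [e1, e2]
    _ = x * y * z * (k * (w * y * (T + 1 / (x * y))) - w * x * T) := by
        rw [show x * y * z * (k * (w * y * (T + 1 / (x * y))) - w * x * T)
            = k * w * y * (x*y*z*T) + k * w * y * (x*y*z*(1/(x*y))) - w*x*T*(x*y*z) by ring, e1]
        linear_combination (-(w * T * x * y * z) - w * z) * h

lemma chain_sum (a : ℕ → ℚ) (κ : ℕ → ℕ) : ∀ s : ℕ,
    (∀ i, i ≤ s + 1 → a i ≠ 0) →
    (∀ i, 1 ≤ i → i ≤ s → (κ i : ℚ) * a i = a (i - 1) + a (i + 1)) →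
    a 0 * a (s + 1) * ∑ i ∈ Finset.range (s + 1), 1 / (a i * a (i + 1))
      = (-1) ^ s * (chainMatrix s κ).det := by
  refine Nat.twoStepInduction ?_ ?_ ?_
  · intro ha _
    have h0 := ha 0 (by omega); have h1 := ha 1 (by omega)
    rw [chain_det_zero]
    simp only [zero_add, Finset.sum_range_one]
    field_simp
  · intro ha hc
    have h0 := ha 0 (by omega); have h1 := ha 1 (by omega); have h2 := ha 2 (by omega)
    have hch := hc 1 (by omega) (by omega)
    norm_num at hch
    rw [chain_det_one]
    rw [Finset.sum_range_succ, Finset.sum_range_one]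
    have : a 0 * a (1 + 1) * (1 / (a 0 * a 1) + 1 / (a 1 * a (1 + 1)))
        = (a 2 + a 0) / a 1 := by
      rw [show (1 : ℕ) + 1 = 2 from rfl]
      field_simp
    rw [this]
    rw [div_eq_iff h1]
    linear_combination -hch
  · intro s ihs ihs1 ha hc
    have ih0 := ihs (fun i hi => ha i (by omega)) (fun i h1 h2 => hc i h1 (by omega))
    have ih1 := ihs1 (fun i hi => ha i (by omega)) (fun i h1 h2 => hc i h1 (by omega))
    have hch := hc (s + 2) (by omega) (by omega)
    have hs1 := ha (s + 1) (by omega); have hs2 := ha (s + 2) (by omega)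
    have hs3 := ha (s + 3) (by omega)
    simp only [show s + 2 - 1 = s + 1 from rfl, show s + 2 + 1 = s + 3 from rfl] at hch
    rw [Finset.sum_range_succ, Finset.sum_range_succ, chain_det_rec]
    rw [Finset.sum_range_succ] at ih1
    simp only [show s + 1 + 1 = s + 2 from rfl, show s + 2 + 1 = s + 3 from rfl] at ih1 ⊢
    have key := step_identity (a (s + 1)) (a (s + 2)) (a (s + 3)) (a 0)
      (∑ i ∈ Finset.range (s + 1), 1 / (a i * a (i + 1))) (κ (s + 2)) hs1 hs2 hs3 hch
    linear_combination key + (κ (s + 2) : ℚ) * ih1 - ih0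

lemma chain_pos_aux (κ : ℕ → ℕ) : ∀ s : ℕ, (∀ i, 1 ≤ i → i ≤ s + 1 → 2 ≤ κ i) →
    1 ≤ (-1 : ℚ) ^ s * (chainMatrix s κ).det ∧
      (-1 : ℚ) ^ s * (chainMatrix s κ).det + 1 ≤ (-1) ^ (s + 1) * (chainMatrix (s + 1) κ).det := by
  intro s
  induction s with
  | zero =>
    intro hκ
    have h1 : (2 : ℚ) ≤ (κ 1 : ℚ) := by exact_mod_cast hκ 1 (by omega) (by omega)
    rw [chain_det_zero, chain_det_one]
    constructor <;> simp <;> linarith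
  | succ s ih =>
    intro hκ
    obtain ⟨h1, h2⟩ := ih (fun i hi hi' => hκ i hi (by omega))
    have hk : (2 : ℚ) ≤ (κ (s + 2) : ℚ) := by exact_mod_cast hκ (s + 2) (by omega) (by omega)
    refine ⟨by linarith, ?_⟩
    have hrec := chain_det_rec κ s
    have e : (-1 : ℚ) ^ (s + 1 + 1) * (chainMatrix (s + 1 + 1) κ).det
        = (κ (s + 2) : ℚ) * ((-1) ^ (s + 1) * (chainMatrix (s + 1) κ).det)
          - (-1) ^ s * (chainMatrix s κ).det := by
      rw [show s + 1 + 1 = s + 2 from rfl, hrec]; ring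
    rw [e]
    nlinarith [h1, h2, hk]

lemma chain_pos (κ : ℕ → ℕ) (s : ℕ) (hκ : ∀ i, 1 ≤ i → i ≤ s → 2 ≤ κ i) :
    0 < (-1 : ℚ) ^ s * (chainMatrix s κ).det := by
  match s with
  | 0 => rw [chain_det_zero]; norm_num
  | s + 1 =>
    obtain ⟨h1, h2⟩ := chain_pos_aux κ s (fun i hi hi' => hκ i hi (by omega))
    linarith

/-- Addendum 5.8: the contribution `∑_{i=0}^{r} 1/(a_i·a_{i+1})` of the chain to the stringy
Euler number equals `(−1)^r·det N/(a_0·a_{r+1})`, and `(−1)^r·det N > 0`, so that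
`(−1)^r·det N` equals the absolute value `d_r` of the determinant of the intersection matrix. -/
theorem chain_euler_contribution (r : ℕ) (hr : 1 ≤ r) (a : ℕ → ℚ)
    (ha : ∀ i, i ≤ r + 1 → a i ≠ 0) (κ : ℕ → ℕ)
    (hκ : ∀ i, 1 ≤ i → i ≤ r → 2 ≤ κ i)
    (hchain : ∀ i, 1 ≤ i → i ≤ r → (κ i : ℚ) * a i = a (i - 1) + a (i + 1)) :
    (∑ i ∈ Finset.range (r + 1), 1 / (a i * a (i + 1)))
        = (-1) ^ r * (chainMatrix r κ).det / (a 0 * a (r + 1))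
      ∧ 0 < (-1) ^ r * (chainMatrix r κ).det
      ∧ (-1) ^ r * (chainMatrix r κ).det = |(chainMatrix r κ).det| := by
  have key := chain_sum a κ r ha hchain
  have hpos := chain_pos κ r hκ
  have h0 := ha 0 (by omega)
  have hr1 := ha (r + 1) (by omega)
  refine ⟨?_, hpos, ?_⟩
  · rw [eq_div_iff (mul_ne_zero h0 hr1)]
    linear_combination key
  · have habs : |(chainMatrix r κ).det| = |(-1) ^ r * (chainMatrix r κ).det| := by
      rw [abs_mul, abs_pow, abs_neg, abs_one, one_pow, one_mul]
    rw [habs, abs_of_pos hpos]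
end

section
/- If r ≥ 3 then b > −1/κ_2, and −1/κ_2 ≥ −1/2. (Addendum 2.9(iii).) -/
/-- Key monotonicity lemma: if `a 1 = 0` and `a 2 ≥ 0`, then along the chain
the values stay nonnegative and increments are at least `a 2`. -/
lemma chain_incr (r : ℕ) (κ : ℕ → ℕ)
    (hκ : ∀ ℓ, 1 ≤ ℓ → ℓ ≤ r → 2 ≤ κ ℓ)
    (a : ℕ → ℚ) (ha1 : a 1 = 0) (ha2 : 0 ≤ a 2)
    (hmid : ∀ ℓ, 2 ≤ ℓ → ℓ ≤ r - 1 → (κ ℓ : ℚ) * a ℓ = a (ℓ - 1) + a (ℓ + 1)) :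
    ∀ ℓ, 1 ≤ ℓ → ℓ + 1 ≤ r → 0 ≤ a ℓ ∧ a 2 ≤ a (ℓ + 1) - a ℓ := by
  intro ℓ hℓ
  induction ℓ, hℓ using Nat.le_induction with
  | base => intro _; constructor <;> simp [ha1]
  | succ n hn ih =>
    intro hn2
    obtain ⟨h0, hd⟩ := ih (by omega)
    have hκn : (2 : ℚ) ≤ (κ (n + 1) : ℚ) := by
      exact_mod_cast hκ (n + 1) (by omega) (by omega)
    have hm := hmid (n + 1) (by omega) (by omega)
    simp only [Nat.add_sub_cancel] at hm
    have han1 : 0 ≤ a (n + 1) := by linarith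
    constructor
    · exact han1
    · nlinarith [mul_nonneg (by linarith : (0:ℚ) ≤ (κ (n+1) : ℚ) - 2) han1]

/-- Addendum 2.9(iii): for a chain of length `r ≥ 3` with `a₁ = 0`,
one has `b > −1/κ₂`, and `−1/κ₂ ≥ −1/2`. -/
theorem addendum_2_9_iii (r : ℕ) (hr : 3 ≤ r) (κ : ℕ → ℕ)
    (hκ : ∀ ℓ, 1 ≤ ℓ → ℓ ≤ r → 2 ≤ κ ℓ)
    (b : ℚ) (a : ℕ → ℚ) (ha1 : a 1 = 0)
    (hfirst : (κ 1 : ℚ) * a 1 = b + a 2)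
    (hmid : ∀ ℓ, 2 ≤ ℓ → ℓ ≤ r - 1 → (κ ℓ : ℚ) * a ℓ = a (ℓ - 1) + a (ℓ + 1))
    (hlast : (κ r : ℚ) * a r = a (r - 1) + 1) :
    b > -1 / (κ 2 : ℚ) ∧ -1 / (κ 2 : ℚ) ≥ -1 / 2 := by
  have hκ2 : (2 : ℚ) ≤ (κ 2 : ℚ) := by exact_mod_cast hκ 2 (by omega) (by omega)
  have hκ2pos : (0 : ℚ) < (κ 2 : ℚ) := by linarith
  have hκr : (2 : ℚ) ≤ (κ r : ℚ) := by exact_mod_cast hκ r (by omega) le_rfl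
  have hb : b = -a 2 := by rw [ha1] at hfirst; linarith
  have hr1 : r - 1 + 1 = r := by omega
  constructor
  · -- b > -1/κ₂
    have ha2pos : 0 < a 2 := by
      by_contra h
      push_neg at h
      -- apply lemma to -a
      have key := chain_incr r κ hκ (fun ℓ => -a ℓ) (by simp [ha1]) (by simpa using h)
        (by intro ℓ h2 hr'; have := hmid ℓ h2 hr'; simp; linarith) (r - 1) (by omega) (by omega)
      rw [hr1] at key
      obtain ⟨h0, hd⟩ := key
      have har : a r ≤ 0 := by linarith
      nlinarith [mul_nonneg (by linarith : (0:ℚ) ≤ (κ r : ℚ) - 2) (by linarith : (0:ℚ) ≤ -a r)]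
    -- a₃ = κ₂ a₂
    have h3 : (κ 2 : ℚ) * a 2 = a 3 := by
      have := hmid 2 le_rfl (by omega)
      norm_num at this
      rw [ha1] at this; linarith
    have key := chain_incr r κ hκ a ha1 (le_of_lt ha2pos) hmid
    -- monotone from 3 to r
    have hmono : ∀ ℓ, 3 ≤ ℓ → ℓ ≤ r → a 3 ≤ a ℓ := by
      intro ℓ hℓ
      induction ℓ, hℓ using Nat.le_induction with
      | base => intro _; exact le_rfl
      | succ n hn ih =>
        intro hn1
        have h := key n (by omega) (by omega)
        have := ih (by omega)
        linarith
    have h3r : a 3 ≤ a r := hmono r hr le_rfl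
    have hlastd := key (r - 1) (by omega) (by omega)
    rw [hr1] at hlastd
    obtain ⟨h0, hd⟩ := hlastd
    have har : 0 ≤ a r := by linarith
    -- 1 ≥ a r + a 2 ≥ a 3 + a 2 > κ₂ a₂
    have h1 : (κ 2 : ℚ) * a 2 < 1 := by
      nlinarith [mul_nonneg (by linarith : (0:ℚ) ≤ (κ r : ℚ) - 2) har]
    rw [gt_iff_lt, div_lt_iff₀ hκ2pos, hb]
    nlinarith
  · rw [ge_iff_le, div_le_div_iff₀ (by norm_num) hκ2pos]
    nlinarith
end
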